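/- The ℓ-page stack layout ⟨≺_H, σ_H⟩ of the host graph H constructed from an instance (G_C, k, (V_1,…,V_k)) of Multi-colored Clique as described in the context has page width at most 3; that is, for every page p and every pair of ≺_H-consecutive vertices w ≺_H w', at most 3 pairs {u, v} assigned to page p satisfy u ⪯_H w and w' ⪯_H v. -/

import Mathlib

/-- The vertices of the W[1]-hardness construction: host vertices `u α j`
(`u 0 0`, `u α j` for `1 ≤ α ≤ k` and `0 ≤ j ≤ n α + 1`, and `u (k+1) 0`, `u (k+1) 1`).
All indices are 1-based as in the paper. -/
inductive CliqueVtx : Type where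
  | u (α : ℕ) (j : ℕ)
  | x (α : ℕ)
deriving DecidableEq

/-- Start position of the block of color `α` on the spine. -/
def cOffset (n : ℕ → ℕ) (α : ℕ) : ℕ :=
  ∑ β ∈ Finset.range α, (if β = 0 then 1 else n β + 2)

/-- The host spine order: `u 0 0 ≺ u 1 0 ≺ u 1 1 ≺ … ≺ u 1 (n 1 + 1) ≺ u 2 0 ≺ …
≺ u k (n k + 1) ≺ u (k+1) 0 ≺ u (k+1) 1`. -/
def cPos (n : ℕ → ℕ) : CliqueVtx → ℕ
  | .u α j => cOffset n α + j
  | .x _ => 0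

/-- The host vertices, i.e. `V(H)`. -/
def cHost (k : ℕ) (n : ℕ → ℕ) : CliqueVtx → Prop
  | .u α j => (α = 0 ∧ j = 0) ∨ (1 ≤ α ∧ α ≤ k ∧ j ≤ n α + 1) ∨ (α = k + 1 ∧ j ≤ 1)
  | .x _ => False

/-- `bV k n α` is the `≺_H`-predecessor of `u α 0`, for `1 ≤ α ≤ k + 1`. -/
def bV (n : ℕ → ℕ) (α : ℕ) : CliqueVtx :=
  if α = 1 then .u 0 0 else .u (α - 1) (n (α - 1) + 1)

/-- `aV k α` is the `≺_H`-successor of `u α 0`, for `1 ≤ α ≤ k + 1`. -/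
def aV (k : ℕ) (α : ℕ) : CliqueVtx :=
  if α = k + 1 then .u (k + 1) 1 else .u α 1

/-- The host page assignment (per-page-edge-set model).  The pages are one page `p_e`
per edge `e ∈ E(G_C)` together with the distinguished page `p_d`, encoded as
`Option {e // e ∈ EC}`, with `none` being `p_d` (so `ℓ = |E(G_C)| + 1`). -/
def cHostPage (k : ℕ) (n : ℕ → ℕ) (EC : Set (Sym2 (ℕ × ℕ))) :
    Option {e : Sym2 (ℕ × ℕ) // e ∈ EC} → Sym2 CliqueVtx → Prop
  | none, ep =>
      (∃ α, 1 ≤ α ∧ α ≤ k + 1 ∧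
        (ep = s(bV n α, CliqueVtx.u α 0) ∨ ep = s(CliqueVtx.u α 0, aV k α))) ∨
      (∃ α, 1 ≤ α ∧ α ≤ k ∧ ep = s(CliqueVtx.u α 0, CliqueVtx.u (α + 1) 0)) ∨
      ep = s(CliqueVtx.u 0 0, CliqueVtx.u (k + 1) 1)
  | some e, ep =>
      (∃ α, 1 ≤ α ∧ α ≤ k + 1 ∧ ep = s(bV n α, aV k α)) ∨
      (∃ α i β j, e.1 = s((α, i), (β, j)) ∧ α < β ∧
        ((∃ γ, 1 ≤ γ ∧ γ ≤ k ∧ γ ≠ α ∧ γ ≠ β ∧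
            ep = s(CliqueVtx.u γ 1, CliqueVtx.u γ (n γ + 1))) ∨
         (1 < i ∧ ep = s(CliqueVtx.u α 1, CliqueVtx.u α i)) ∨
         (i < n α ∧ ep = s(CliqueVtx.u α (i + 1), CliqueVtx.u α (n α + 1))) ∨
         (1 < j ∧ ep = s(CliqueVtx.u β 1, CliqueVtx.u β j)) ∨
         (j < n β ∧ ep = s(CliqueVtx.u β (j + 1), CliqueVtx.u β (n β + 1))) ∨
         ep = s(CliqueVtx.u α i, CliqueVtx.u β (j + 1)) ∨
         ep = s(CliqueVtx.u α (i + 1), CliqueVtx.u β j)))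

/-!
Let `g < G` be the spine positions of `w` and `w'`. Every page is covered by three families of
pairs, each of which has at most one member over the gap `(g, G)`. On `p_d` these are the long
pair `{u_0^0, u_{k+1}^1}`, the pairs `{u_γ^0, u_{γ+1}^0}`, which cut the spine into the blocks of
the colors, and the pairs of length one. On `p_e` they are the two pairs `{u_α^i, u_β^{j+1}}`,
`{u_α^{i+1}, u_β^j}`, and all the remaining ones: each of those lies inside one block
`[b_γ, b_{γ+1}]` and they have pairwise disjoint interiors, so the block containing the gap and
the position of the gap inside it determine the only one that can lie over the gap.
-/

theorem Monotone.eq_of_mem_Ico_succ {α : Type*} [Preorder α] {f : ℕ → α} (hf : Monotone f)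
    {a b : ℕ} {x : α} (ha : x ∈ Set.Ico (f a) (f (a + 1)))
    (hb : x ∈ Set.Ico (f b) (f (b + 1))) : a = b := by
  by_contra hne
  rcases Nat.lt_or_gt_of_ne hne with h | h
  · exact (hb.1.trans_lt ha.2).not_ge (hf h)
  · exact (ha.1.trans_lt hb.2).not_ge (hf h)

theorem Sym2.eq_and_eq_of_mk_eq_of_lt {V α : Type*} [Preorder α] {f : V → α} {x y x' y' : V}
    (h : s(x, y) = s(x', y')) (hxy : f x < f y) (hxy' : f x' < f y') : x = x' ∧ y = y' := by
  rcases Sym2.eq_iff.1 h with h | ⟨rfl, rfl⟩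
  · exact h
  · exact absurd (hxy.trans hxy') (lt_irrefl _)

theorem Set.ncard_le_three_of_subset_union {α : Type*} {S A B C : Set α} (hA : A.Subsingleton)
    (hB : B.Subsingleton) (hC : C.Subsingleton) (h : S ⊆ A ∪ B ∪ C) : S.ncard ≤ 3 := by
  have ncard_le_one {T : Set α} (hT : T.Subsingleton) : T.ncard ≤ 1 :=
    (Set.ncard_le_one hT.finite).2 fun _ ha _ hb => hT ha hb
  calc S.ncard ≤ (A ∪ B ∪ C).ncard :=
        Set.ncard_le_ncard h ((hA.finite.union hB.finite).union hC.finite)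
    _ ≤ A.ncard + B.ncard + C.ncard :=
        (Set.ncard_union_le _ _).trans (by gcongr; exact Set.ncard_union_le _ _)
    _ ≤ 3 := by linarith [ncard_le_one hA, ncard_le_one hB, ncard_le_one hC]

section SpansGap

variable {V : Type*} (f : V → ℕ) (g G : ℕ)

def SpansGap (e : Sym2 V) : Prop :=
  ∃ a b, e = s(a, b) ∧ f a ≤ g ∧ G ≤ f b

variable {f g G}

theorem SpansGap.le_and_lt_of_mk {x y : V} (h : SpansGap f g G s(x, y)) (hxy : f x ≤ f y)
    (hgG : g < G) : f x ≤ g ∧ g < f y := by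
  obtain ⟨a, b, hab, ha, hb⟩ := h
  rcases Sym2.eq_iff.1 hab with ⟨rfl, rfl⟩ | ⟨rfl, rfl⟩ <;> omega

end SpansGap

section Positions

variable (k : ℕ) (n : ℕ → ℕ)

@[simp]
theorem cPos_u (α j : ℕ) : cPos n (.u α j) = cOffset n α + j := rfl

theorem cOffset_monotone : Monotone (cOffset n) := fun _ _ h =>
  Finset.sum_le_sum_of_subset (Finset.range_subset_range.2 h)

theorem cOffset_succ_of_pos {γ : ℕ} (hγ : 1 ≤ γ) : cOffset n (γ + 1) = cOffset n γ + n γ + 2 := by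
  rw [cOffset, Finset.sum_range_succ, if_neg (by omega), ← add_assoc]
  rfl

theorem cPos_bV_add_one {γ : ℕ} (hγ : 1 ≤ γ) : cPos n (bV n γ) + 1 = cOffset n γ := by
  unfold bV
  split_ifs with h
  · subst h; rfl
  · have := cOffset_succ_of_pos n (show 1 ≤ γ - 1 by omega)
    rw [Nat.sub_add_cancel hγ] at this
    simp only [cPos_u]
    omega

theorem cPos_aV (γ : ℕ) : cPos n (aV k γ) = cOffset n γ + 1 := by
  unfold aV
  split_ifs with h
  · subst h; rfl
  · rfl

end Positions

def cUnitPairAt (k : ℕ) (n : ℕ → ℕ) (γ g : ℕ) : Sym2 CliqueVtx :=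
  if g < cOffset n γ then s(bV n γ, .u γ 0) else s(.u γ 0, aV k γ)

section DistinguishedPage

variable {k : ℕ} {n : ℕ → ℕ} {g G : ℕ}

theorem subsingleton_chainPair_spansGap (hgG : g < G) :
    {e | (∃ γ, e = s(CliqueVtx.u γ 0, .u (γ + 1) 0)) ∧ SpansGap (cPos n) g G e}.Subsingleton := by
  have mem_block {γ : ℕ} (hs : SpansGap (cPos n) g G s(CliqueVtx.u γ 0, .u (γ + 1) 0)) :
      g ∈ Set.Ico (cOffset n γ) (cOffset n (γ + 1)) := by
    simpa using hs.le_and_lt_of_mk (by simpa using cOffset_monotone n γ.le_succ) hgG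
  rintro _ ⟨⟨γ₁, rfl⟩, hs₁⟩ _ ⟨⟨γ₂, rfl⟩, hs₂⟩
  rw [(cOffset_monotone n).eq_of_mem_Ico_succ (mem_block hs₁) (mem_block hs₂)]

theorem eq_cUnitPairAt_of_spansGap {γ : ℕ} {e : Sym2 CliqueVtx} (hgG : g < G) (hγ : 1 ≤ γ)
    (he : e = s(bV n γ, .u γ 0) ∨ e = s(.u γ 0, aV k γ)) (hs : SpansGap (cPos n) g G e) :
    g + 1 ∈ Set.Ico (cOffset n γ) (cOffset n (γ + 1)) ∧ e = cUnitPairAt k n γ g := by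
  have hb := cPos_bV_add_one n hγ
  have ha := cPos_aV k n γ
  have hsucc := cOffset_succ_of_pos n hγ
  rcases he with rfl | rfl
  · have hspan := hs.le_and_lt_of_mk (by rw [cPos_u]; omega) hgG
    rw [cPos_u] at hspan
    exact ⟨⟨by omega, by omega⟩, by rw [cUnitPairAt, if_pos (by omega)]⟩
  · have hspan := hs.le_and_lt_of_mk (by rw [cPos_u]; omega) hgG
    rw [cPos_u] at hspan
    exact ⟨⟨by omega, by omega⟩, by rw [cUnitPairAt, if_neg (by omega)]⟩

theorem subsingleton_unitPair_spansGap (hgG : g < G) :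
    {e | (∃ γ, 1 ≤ γ ∧ (e = s(bV n γ, .u γ 0) ∨ e = s(.u γ 0, aV k γ))) ∧
      SpansGap (cPos n) g G e}.Subsingleton := by
  rintro _ ⟨⟨γ₁, hγ₁, he₁⟩, hs₁⟩ _ ⟨⟨γ₂, hγ₂, he₂⟩, hs₂⟩
  obtain ⟨hblock₁, rfl⟩ := eq_cUnitPairAt_of_spansGap hgG hγ₁ he₁ hs₁
  obtain ⟨hblock₂, rfl⟩ := eq_cUnitPairAt_of_spansGap hgG hγ₂ he₂ hs₂
  rw [(cOffset_monotone n).eq_of_mem_Ico_succ hblock₁ hblock₂]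

end DistinguishedPage

/-- The pairs of page `p_e`, for `e = v_α^i v_β^j`, other than `{u_α^i, u_β^{j+1}}` and
`{u_α^{i+1}, u_β^j}`. -/
def cBlockPair (k : ℕ) (n : ℕ → ℕ) (α i β j : ℕ) (e : Sym2 CliqueVtx) : Prop :=
  (∃ γ, 1 ≤ γ ∧ e = s(bV n γ, aV k γ)) ∨
  (∃ γ, 1 ≤ γ ∧ γ ≠ α ∧ γ ≠ β ∧ e = s(.u γ 1, .u γ (n γ + 1))) ∨
  (1 < i ∧ e = s(.u α 1, .u α i)) ∨
  (i < n α ∧ e = s(.u α (i + 1), .u α (n α + 1))) ∨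
  (1 < j ∧ e = s(.u β 1, .u β j)) ∨
  (j < n β ∧ e = s(.u β (j + 1), .u β (n β + 1)))

/-- The only pair of `cBlockPair k n α i β j` inside the block `[b_γ, b_{γ+1}]` that can contain
the gap `(g, g + 1)`. -/
def cBlockPairAt (k : ℕ) (n : ℕ → ℕ) (α i β j γ g : ℕ) : Sym2 CliqueVtx :=
  if g ≤ cOffset n γ then s(bV n γ, aV k γ)
  else if γ = α then
    if g < cOffset n α + i then s(.u α 1, .u α i) else s(.u α (i + 1), .u α (n α + 1))
  else if γ = β then
    if g < cOffset n β + j then s(.u β 1, .u β j) else s(.u β (j + 1), .u β (n β + 1))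
  else s(.u γ 1, .u γ (n γ + 1))

section EdgePage

variable {k : ℕ} {n : ℕ → ℕ} {g G α i β j : ℕ}

theorem spansGap_u_u_bounds {γ s t : ℕ} (hgG : g < G) (hγ : 1 ≤ γ) (hst : s ≤ t)
    (ht : t ≤ n γ + 1) (hs : SpansGap (cPos n) g G s(.u γ s, .u γ t)) :
    cOffset n γ + s ≤ g ∧ g < cOffset n γ + t ∧
      g + 1 ∈ Set.Ico (cOffset n γ) (cOffset n (γ + 1)) := by
  have hspan := hs.le_and_lt_of_mk (by simpa using hst) hgG
  have hsucc := cOffset_succ_of_pos n hγ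
  simp only [cPos_u] at hspan
  exact ⟨by omega, by omega, by omega, by omega⟩

theorem cBlockPair.exists_eq_cBlockPairAt {e : Sym2 CliqueVtx} (hα : 1 ≤ α) (hαβ : α < β)
    (hi : i ≤ n α) (hj : j ≤ n β) (hgG : g < G) (he : cBlockPair k n α i β j e)
    (hs : SpansGap (cPos n) g G e) :
    ∃ γ, g + 1 ∈ Set.Ico (cOffset n γ) (cOffset n (γ + 1)) ∧
      e = cBlockPairAt k n α i β j γ g := by
  rcases he with ⟨γ, hγ, rfl⟩ | ⟨γ, hγ, hγα, hγβ, rfl⟩ | ⟨hi', rfl⟩ | ⟨hi', rfl⟩ | ⟨hj', rfl⟩ |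
    ⟨hj', rfl⟩
  · have hb := cPos_bV_add_one n hγ
    have ha := cPos_aV k n γ
    have hspan := hs.le_and_lt_of_mk (by omega) hgG
    have hsucc := cOffset_succ_of_pos n hγ
    exact ⟨γ, ⟨by omega, by omega⟩, by rw [cBlockPairAt, if_pos (by omega)]⟩
  all_goals
    obtain ⟨hlo, hhi, hblock⟩ := spansGap_u_u_bounds hgG (by omega) (by omega) (by omega) hs
    exact ⟨_, hblock, by unfold cBlockPairAt; split_ifs <;> first | rfl | omega⟩

theorem subsingleton_cBlockPair_spansGap (hα : 1 ≤ α) (hαβ : α < β) (hi : i ≤ n α)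
    (hj : j ≤ n β) (hgG : g < G) :
    {e | cBlockPair k n α i β j e ∧ SpansGap (cPos n) g G e}.Subsingleton := by
  rintro _ ⟨he₁, hs₁⟩ _ ⟨he₂, hs₂⟩
  obtain ⟨γ₁, hblock₁, rfl⟩ := he₁.exists_eq_cBlockPairAt hα hαβ hi hj hgG hs₁
  obtain ⟨γ₂, hblock₂, rfl⟩ := he₂.exists_eq_cBlockPairAt hα hαβ hi hj hgG hs₂
  rw [(cOffset_monotone n).eq_of_mem_Ico_succ hblock₁ hblock₂]

theorem cHostPage_some_cases {EC : Set (Sym2 (ℕ × ℕ))} {e : {e // e ∈ EC}}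
    {ep : Sym2 CliqueVtx} (he : e.1 = s((α, i), (β, j))) (hαβ : α < β)
    (h : cHostPage k n EC (some e) ep) :
    cBlockPair k n α i β j ep ∨ ep = s(.u α i, .u β (j + 1)) ∨ ep = s(.u α (i + 1), .u β j) := by
  rcases h with ⟨γ, hγ, -, rfl⟩ | ⟨α', i', β', j', he', hαβ', hcases⟩
  · exact Or.inl (Or.inl ⟨γ, hγ, rfl⟩)
  obtain ⟨hfst, hsnd⟩ :=
    Sym2.eq_and_eq_of_mk_eq_of_lt (f := Prod.fst) (he.symm.trans he') hαβ hαβ'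
  obtain ⟨rfl, rfl⟩ := Prod.mk.inj hfst
  obtain ⟨rfl, rfl⟩ := Prod.mk.inj hsnd
  rcases hcases with ⟨γ, hγ, -, hγα, hγβ, rfl⟩ | h | h | h | h | h | h
  · exact Or.inl (Or.inr (Or.inl ⟨γ, hγ, hγα, hγβ, rfl⟩))
  all_goals unfold cBlockPair; tauto

end EdgePage

theorem stmt7_general (k : ℕ) (n : ℕ → ℕ)
    (EC : Set (Sym2 (ℕ × ℕ)))
    (hEC : ∀ e ∈ EC, ∃ α i β j, e = s((α, i), (β, j)) ∧
      1 ≤ α ∧ α < β ∧ β ≤ k ∧ 1 ≤ i ∧ i ≤ n α ∧ 1 ≤ j ∧ j ≤ n β) :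
    ∀ (p : Option {e : Sym2 (ℕ × ℕ) // e ∈ EC}) (w w' : CliqueVtx),
      cHost k n w → cHost k n w' → cPos n w < cPos n w' →
      (∀ z, cHost k n z → ¬(cPos n w < cPos n z ∧ cPos n z < cPos n w')) →
      Set.ncard {ep : Sym2 CliqueVtx | cHostPage k n EC p ep ∧
        ∃ a b : CliqueVtx, ep = s(a, b) ∧ cPos n a ≤ cPos n w ∧ cPos n w' ≤ cPos n b} ≤ 3 := by
  intro p w w' _ _ hww _
  rcases p with _ | ⟨e, he⟩
  · refine Set.ncard_le_three_of_subset_union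
      (subsingleton_unitPair_spansGap (k := k) (n := n) hww)
      (subsingleton_chainPair_spansGap (n := n) hww)
      (Set.subsingleton_singleton (a := s(.u 0 0, .u (k + 1) 1))) ?_
    rintro ep ⟨⟨γ, hγ, -, hunit⟩ | ⟨γ, -, -, hchain⟩ | hlong, hs⟩
    · exact Or.inl (Or.inl ⟨⟨γ, hγ, hunit⟩, hs⟩)
    · exact Or.inl (Or.inr ⟨⟨γ, hchain⟩, hs⟩)
    · exact Or.inr hlong
  · obtain ⟨α, i, β, j, he_eq, hα, hαβ, -, -, hi, -, hj⟩ := hEC e he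
    refine Set.ncard_le_three_of_subset_union
      (subsingleton_cBlockPair_spansGap (k := k) hα hαβ hi hj hww)
      (Set.subsingleton_singleton (a := s(.u α i, .u β (j + 1))))
      (Set.subsingleton_singleton (a := s(.u α (i + 1), .u β j))) ?_
    rintro ep ⟨hpage, hs⟩
    rcases cHostPage_some_cases (e := ⟨e, he⟩) he_eq hαβ hpage with hblock | hcross | hcross
    · exact Or.inl (Or.inl ⟨hblock, hs⟩)
    · exact Or.inl (Or.inr hcross)
    · exact Or.inr hcross

/-- The host layout of the W[1]-hardness construction has page width
at most `3`: for every page `p` and every pair of `≺_H`-consecutive host vertices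
`w ≺ w'`, at most `3` pairs assigned to page `p` span the interval between them. -/
theorem stmt7 (k : ℕ) (n : ℕ → ℕ) (hn : ∀ α, 1 ≤ α → α ≤ k → 1 ≤ n α)
    (EC : Set (Sym2 (ℕ × ℕ)))
    (hEC : ∀ e ∈ EC, ∃ α i β j, e = s((α, i), (β, j)) ∧
      1 ≤ α ∧ α < β ∧ β ≤ k ∧ 1 ≤ i ∧ i ≤ n α ∧ 1 ≤ j ∧ j ≤ n β) :
    ∀ (p : Option {e : Sym2 (ℕ × ℕ) // e ∈ EC}) (w w' : CliqueVtx),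
      cHost k n w → cHost k n w' → cPos n w < cPos n w' →
      (∀ z, cHost k n z → ¬(cPos n w < cPos n z ∧ cPos n z < cPos n w')) →
      Set.ncard {ep : Sym2 CliqueVtx | cHostPage k n EC p ep ∧
        ∃ a b : CliqueVtx, ep = s(a, b) ∧ cPos n a ≤ cPos n w ∧ cPos n w' ≤ cPos n b} ≤ 3 :=
  stmt7_general k n EC hEC
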